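/- Let F be a fractal subset of [0,1] with complementary intervals (I_n) satisfying the lacunarity condition with some constant λ ∈ (0,1]. Then −∞ < liminf_{n→∞} log|I_n| / log n ≤ limsup_{n→∞} log|I_n| / log n ≤ −1. -/

import Mathlib

open MeasureTheory Filter Set
open scoped Classical

noncomputable section

/-- The enlargement `B̄^a` of the interval `[s,t]` by the factor `1+a` about its centre. -/
def enlarge (a s t : ℝ) : Set ℝ :=
  Set.Icc (s - a * (t - s) / 2) (t + a * (t - s) / 2)

/-- The moment sum `Σ_{B ∈ B_r^*} μ(B̄^a)^q` over grid intervals of length `r`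
whose interior meets the support of `μ` (i.e. with `μ(B) > 0`). -/
def gridSum (μ : Measure ℝ) (a q R : ℝ) : ℝ :=
  ∑' m : ℤ, if 0 < μ (Set.Icc ((m : ℝ) * R) (((m : ℝ) + 1) * R))
    then (μ (enlarge a ((m : ℝ) * R) (((m : ℝ) + 1) * R))).toReal ^ q else 0

/-- The coarse multifractal moment function
`β_a(q) = inf{β : limsup_{r→0⁺} r^β Σ_{B ∈ B_r^*} μ(B̄^a)^q = 0}`.
(For the nonnegative quantity `r^β · Σ…`, vanishing of the `limsup` as `r → 0⁺`
is the same as convergence to `0`.) -/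
def betaA (μ : Measure ℝ) (a q : ℝ) : ℝ :=
  sInf {β : ℝ | Filter.Tendsto (fun R => R ^ β * gridSum μ a q R)
    (nhdsWithin 0 (Set.Ioi 0)) (nhds 0)}

/-- `F` is a "fractal subset" of `[0,1]`: compact, Lebesgue-null, containing `0` and `1`. -/
def IsFractalSubset (F : Set ℝ) : Prop :=
  IsCompact F ∧ F ⊆ Set.Icc 0 1 ∧ (0 : ℝ) ∈ F ∧ (1 : ℝ) ∈ F ∧ MeasureTheory.volume F = 0

/-- The complementary intervals `I_n = (l n, r n)` of `F` in `[0,1]`, enumerated with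
nonincreasing lengths. -/
structure FractalComplement (F : Set ℝ) where
  l : ℕ → ℝ
  r : ℕ → ℝ
  lt : ∀ n, l n < r n
  disj : Pairwise fun n m => Disjoint (Set.Ioo (l n) (r n)) (Set.Ioo (l m) (r m))
  union : (⋃ n, Set.Ioo (l n) (r n)) = Set.Icc (0 : ℝ) 1 \ F
  mono : ∀ n, r (n + 1) - l (n + 1) ≤ r n - l n

/-- The length `|I_n|` of the `n`-th complementary interval. -/
def FractalComplement.len {F : Set ℝ} (c : FractalComplement F) (n : ℕ) : ℝ := c.r n - c.l n

/-- The enlargement `Ī_n^a` of the closure of the complementary interval `I_n`. -/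
def FractalComplement.I {F : Set ℝ} (c : FractalComplement F) (a : ℝ) (n : ℕ) : Set ℝ :=
  enlarge a (c.l n) (c.r n)

/-- The lacunarity condition with constant `lam`: every interval `[x-r, x+r]` with `x ∈ F`
and `0 < r ≤ 1` contains a complementary interval of length at least `lam * r`. -/
def Lacunary {F : Set ℝ} (c : FractalComplement F) (lam : ℝ) : Prop :=
  ∀ x ∈ F, ∀ R : ℝ, 0 < R → R ≤ 1 → ∃ n,
    Set.Ioo (c.l n) (c.r n) ⊆ Set.Icc (x - R) (x + R) ∧ lam * R ≤ c.len n

/-- The topological support of `μ` is exactly `F`. -/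
def HasSupport (μ : Measure ℝ) (F : Set ℝ) : Prop :=
  μ Fᶜ = 0 ∧ ∀ x ∈ F, ∀ ε : ℝ, 0 < ε → 0 < μ (Set.Ioo (x - ε) (x + ε))

/-!
The first `n + 1` gaps are disjoint subintervals of `[0,1]`, each at least as long as `I_n`, so
`(n + 1) |I_n| ≤ 1`; this gives the upper bound `-1`.

For the lower bound, lacunarity splits a point of `F` into the two endpoints of a nearby gap.
Starting from one point of `F` and splitting at radius `(λ/4)^k/4` in generation `k`, one obtains
`2^k` points of `F` that are pairwise `(λ/4)^k` apart. Lacunarity at radius `(λ/4)^k/2` around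
each of them yields `2^k` distinct gaps of length at least `(λ/2)(λ/4)^k`, so `|I_n|` decays at
most polynomially: `|I_n| ≥ (λ²/8) n^(-log₂(4/λ))`.
-/

open Real

theorem Set.Ioo_subset_Icc_iff {α : Type*} [LinearOrder α] [DenselyOrdered α]
    [TopologicalSpace α] [OrderTopology α] {a b x y : α} (hab : a < b) :
    Ioo a b ⊆ Icc x y ↔ x ≤ a ∧ b ≤ y :=
  ⟨fun h => (Icc_subset_Icc_iff hab.le).1 (closure_Ioo hab.ne ▸ closure_minimal h isClosed_Icc),
    fun h => Ioo_subset_Icc_self.trans (Icc_subset_Icc h.1 h.2)⟩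

theorem Antitone.le_of_lt_card {β : Type*} [Preorder β] {f : ℕ → β} (hf : Antitone f)
    {s : Finset ℕ} {a : β} {n : ℕ} (hn : n < s.card) (ha : ∀ m ∈ s, a ≤ f m) :
    a ≤ f n := by
  obtain ⟨m, hms, hmn⟩ :=
    Finset.exists_mem_notMem_of_card_lt_card (s := Finset.range n) (by simpa using hn)
  exact (ha m hms).trans (hf (by simpa using hmn))

section Splitting

variable {S : Finset ℝ} {d e : ℝ} {f g : ℝ → ℝ}

theorem half_le_abs_sub_of_abs_sub_le {x y p q : ℝ} (hxy : d ≤ |x - y|) (hp : |p - x| ≤ d / 4)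
    (hq : |q - y| ≤ d / 4) : d / 2 ≤ |p - q| := by
  have hxq := abs_sub_le x p q
  have hqy := abs_sub_le x q y
  rw [abs_sub_comm x p] at hxq
  linarith

theorem abs_sub_le_of_mem_pair {x p r : ℝ} (hf : |f x - x| ≤ r) (hg : |g x - x| ≤ r)
    (hp : p ∈ ({f x, g x} : Finset ℝ)) : |p - x| ≤ r := by
  rw [Finset.mem_insert, Finset.mem_singleton] at hp
  rcases hp with rfl | rfl
  exacts [hf, hg]

theorem Finset.pairwise_biUnion_pair_of_separated
    (hS : (S : Set ℝ).Pairwise fun x y => d ≤ |x - y|)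
    (hf : ∀ x ∈ S, |f x - x| ≤ d / 4) (hg : ∀ x ∈ S, |g x - x| ≤ d / 4)
    (hfg : ∀ x ∈ S, e ≤ |f x - g x|) (hed : e ≤ d / 2) :
    ((S.biUnion fun x => {f x, g x} : Finset ℝ) : Set ℝ).Pairwise fun p q => e ≤ |p - q| := by
  intro p hp q hq hpq
  obtain ⟨x, hx, hpx⟩ := Finset.mem_biUnion.1 hp
  obtain ⟨y, hy, hqy⟩ := Finset.mem_biUnion.1 hq
  by_cases hxy : x = y
  · subst hxy
    rw [Finset.mem_insert, Finset.mem_singleton] at hpx hqy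
    rcases hpx with rfl | rfl <;> rcases hqy with rfl | rfl
    · exact absurd rfl hpq
    · exact hfg x hx
    · exact abs_sub_comm (f x) (g x) ▸ hfg x hx
    · exact absurd rfl hpq
  · exact hed.trans <| half_le_abs_sub_of_abs_sub_le (hS hx hy hxy)
      (abs_sub_le_of_mem_pair (hf x hx) (hg x hx) hpx)
      (abs_sub_le_of_mem_pair (hf y hy) (hg y hy) hqy)

theorem Finset.card_biUnion_pair_of_separated
    (hS : (S : Set ℝ).Pairwise fun x y => d ≤ |x - y|)
    (hf : ∀ x ∈ S, |f x - x| ≤ d / 4) (hg : ∀ x ∈ S, |g x - x| ≤ d / 4)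
    (hfg : ∀ x ∈ S, e ≤ |f x - g x|) (he : 0 < e) (hed : e ≤ d / 2) :
    (S.biUnion fun x => {f x, g x}).card = S.card * 2 := by
  rw [Finset.card_biUnion, Finset.sum_const_nat]
  · intro x hx
    refine Finset.card_pair fun hfgx => ?_
    have := hfg x hx
    rw [hfgx, sub_self, abs_zero] at this
    linarith
  · intro x hx y hy hxy
    rw [Function.onFun, Finset.disjoint_left]
    intro p hpx hpy
    have := half_le_abs_sub_of_abs_sub_le (hS hx hy hxy)
      (abs_sub_le_of_mem_pair (hf x hx) (hg x hx) hpx)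
      (abs_sub_le_of_mem_pair (hf y hy) (hg y hy) hpy)
    rw [sub_self, abs_zero] at this
    linarith

end Splitting

namespace FractalComplement

variable {F : Set ℝ} (c : FractalComplement F)

theorem len_pos (n : ℕ) : 0 < c.len n := sub_pos.2 (c.lt n)

theorem len_antitone : Antitone c.len := antitone_nat_of_succ_le c.mono

theorem Ioo_subset (n : ℕ) : Ioo (c.l n) (c.r n) ⊆ Icc 0 1 \ F :=
  c.union ▸ subset_iUnion (fun m => Ioo (c.l m) (c.r m)) n

theorem Icc_subset (n : ℕ) : Icc (c.l n) (c.r n) ⊆ Icc 0 1 := by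
  obtain ⟨h0, h1⟩ := (Ioo_subset_Icc_iff (c.lt n)).1 ((c.Ioo_subset n).trans sdiff_subset)
  exact Icc_subset_Icc h0 h1

theorem eq_of_mem_Ioo_of_mem_Icc {x : ℝ} {m n : ℕ} (hm : x ∈ Ioo (c.l m) (c.r m))
    (hn : x ∈ Icc (c.l n) (c.r n)) : m = n := by
  by_contra hmn
  have := Ioo_disjoint_Ioo.1 (c.disj hmn)
  exact this.not_gt
    (max_lt (lt_min (c.lt m) (hm.1.trans_le hn.2)) (lt_min (hn.1.trans_lt hm.2) (c.lt n)))

theorem l_mem (n : ℕ) : c.l n ∈ F := by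
  by_contra hn
  have : c.l n ∈ Icc 0 1 \ F := ⟨c.Icc_subset n (left_mem_Icc.2 (c.lt n).le), hn⟩
  rw [← c.union, mem_iUnion] at this
  obtain ⟨m, hm⟩ := this
  obtain rfl := c.eq_of_mem_Ioo_of_mem_Icc hm (left_mem_Icc.2 (c.lt n).le)
  exact lt_irrefl _ hm.1

theorem r_mem (n : ℕ) : c.r n ∈ F := by
  by_contra hn
  have : c.r n ∈ Icc 0 1 \ F := ⟨c.Icc_subset n (right_mem_Icc.2 (c.lt n).le), hn⟩
  rw [← c.union, mem_iUnion] at this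
  obtain ⟨m, hm⟩ := this
  obtain rfl := c.eq_of_mem_Ioo_of_mem_Icc hm (right_mem_Icc.2 (c.lt n).le)
  exact lt_irrefl _ hm.2

theorem sum_len_le_one (s : Finset ℕ) : ∑ n ∈ s, c.len n ≤ 1 := by
  have hvol : volume (⋃ n ∈ s, Ioo (c.l n) (c.r n)) ≤ 1 :=
    calc volume (⋃ n ∈ s, Ioo (c.l n) (c.r n))
        ≤ volume (Icc (0 : ℝ) 1) :=
          measure_mono (iUnion₂_subset fun n _ => (c.Ioo_subset n).trans sdiff_subset)
      _ = 1 := by simp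
  rw [measure_biUnion_finset (fun m _ n _ hmn => c.disj hmn) (fun _ _ => measurableSet_Ioo)]
    at hvol
  simp only [Real.volume_Ioo] at hvol
  rw [← ENNReal.ofReal_sum_of_nonneg (f := fun n => c.r n - c.l n) fun n _ => (c.len_pos n).le]
    at hvol
  exact ENNReal.ofReal_le_one.1 hvol

theorem len_le_rpow_neg_one {n : ℕ} (hn : n ≠ 0) : c.len n ≤ (n : ℝ) ^ (-1 : ℝ) := by
  have hsucc : ((n : ℝ) + 1) * c.len n ≤ 1 :=
    calc ((n : ℝ) + 1) * c.len n = ∑ _m ∈ Finset.range (n + 1), c.len n := by simp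
      _ ≤ ∑ m ∈ Finset.range (n + 1), c.len m :=
          Finset.sum_le_sum fun m hm => c.len_antitone (Finset.mem_range_succ_iff.1 hm)
      _ ≤ 1 := c.sum_len_le_one _
  have hn' : (0 : ℝ) < n := by positivity
  rw [rpow_neg_one, ← one_div, le_div_iff₀ hn']
  nlinarith [c.len_pos n]

theorem abs_sub_lt_of_Ioo_subset {x y ρ : ℝ} {n : ℕ}
    (hx : Ioo (c.l n) (c.r n) ⊆ Icc (x - ρ) (x + ρ))
    (hy : Ioo (c.l n) (c.r n) ⊆ Icc (y - ρ) (y + ρ)) : |x - y| < 2 * ρ := by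
  rw [Ioo_subset_Icc_iff (c.lt n)] at hx hy
  have := c.lt n
  rw [abs_sub_lt_iff]
  constructor <;> linarith

end FractalComplement

namespace Lacunary

variable {F : Set ℝ} {c : FractalComplement F} {lam : ℝ}

theorem exists_separated (hlac : Lacunary c lam) (hlam0 : 0 < lam) (hlam1 : lam ≤ 1)
    (hF : F.Nonempty) (k : ℕ) : ∃ S : Finset ℝ, S.card = 2 ^ k ∧ ↑S ⊆ F ∧
      (S : Set ℝ).Pairwise fun x y => (lam / 4) ^ k ≤ |x - y| := by
  induction k with
  | zero =>
    obtain ⟨x, hx⟩ := hF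
    exact ⟨{x}, by simp, by simpa using hx, by simp⟩
  | succ k ih =>
    obtain ⟨S, hcard, hSF, hsep⟩ := ih
    choose! g hg using hlac
    set ρ := (lam / 4) ^ k / 4 with hρ
    have hδ : 0 < (lam / 4) ^ k := by positivity
    have hδ1 : (lam / 4) ^ k ≤ 1 := pow_le_one₀ (by positivity) (by linarith)
    have hgap (x) (hx : x ∈ S) := hg x (hSF hx) ρ (by positivity) (by linarith)
    have hnear (x) (hx : x ∈ S) : |c.l (g x ρ) - x| ≤ ρ ∧ |c.r (g x ρ) - x| ≤ ρ := by
      have := (Ioo_subset_Icc_iff (c.lt (g x ρ))).1 (hgap x hx).1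
      have := c.lt (g x ρ)
      constructor <;> rw [abs_sub_le_iff] <;> constructor <;> linarith
    have hwide (x) (hx : x ∈ S) : (lam / 4) ^ (k + 1) ≤ |c.l (g x ρ) - c.r (g x ρ)| := by
      rw [abs_sub_comm, abs_of_pos (sub_pos.2 (c.lt (g x ρ)))]
      calc (lam / 4) ^ (k + 1) = lam * ρ := by ring
        _ ≤ c.len (g x ρ) := (hgap x hx).2
    have hhalf : (lam / 4) ^ (k + 1) ≤ (lam / 4) ^ k / 2 := by
      rw [pow_succ]
      nlinarith
    refine ⟨S.biUnion fun x => {c.l (g x ρ), c.r (g x ρ)}, ?_, ?_, ?_⟩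
    · rw [Finset.card_biUnion_pair_of_separated hsep (fun x hx => (hnear x hx).1)
        (fun x hx => (hnear x hx).2) hwide (by positivity) hhalf, hcard, pow_succ]
    · intro p hp
      obtain ⟨x, -, hpx⟩ := Finset.mem_biUnion.1 hp
      rw [Finset.mem_insert, Finset.mem_singleton] at hpx
      rcases hpx with rfl | rfl
      exacts [c.l_mem _, c.r_mem _]
    · exact Finset.pairwise_biUnion_pair_of_separated hsep (fun x hx => (hnear x hx).1)
        (fun x hx => (hnear x hx).2) hwide hhalf

theorem le_len_of_lt_two_pow (hlac : Lacunary c lam) (hlam0 : 0 < lam) (hlam1 : lam ≤ 1)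
    {k n : ℕ} (hn : n < 2 ^ k) : lam / 2 * (lam / 4) ^ k ≤ c.len n := by
  obtain ⟨S, hcard, hSF, hsep⟩ := hlac.exists_separated hlam0 hlam1 ⟨_, c.l_mem 0⟩ k
  choose! g hg using hlac
  set ρ := (lam / 4) ^ k / 2 with hρ
  have hδ1 : (lam / 4) ^ k ≤ 1 := pow_le_one₀ (by positivity) (by linarith)
  have hgap (x) (hx : x ∈ S) := hg x (hSF hx) ρ (by positivity) (by linarith)
  refine c.len_antitone.le_of_lt_card (s := S.image (g · ρ)) ?_ ?_
  · rw [Finset.card_image_of_injOn, hcard]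
    · exact hn
    intro x hx y hy (hxy : g x ρ = g y ρ)
    by_contra hne
    have := c.abs_sub_lt_of_Ioo_subset (hgap x hx).1 (hxy ▸ (hgap y hy).1)
    have := hsep hx hy hne
    linarith
  · simp only [Finset.forall_mem_image]
    intro x hx
    calc lam / 2 * (lam / 4) ^ k = lam * ρ := by ring
      _ ≤ c.len (g x ρ) := (hgap x hx).2

theorem rpow_le_len (hlac : Lacunary c lam) (hlam0 : 0 < lam) (hlam1 : lam ≤ 1) {n : ℕ}
    (hn : n ≠ 0) : lam ^ 2 / 8 * (n : ℝ) ^ (-logb 2 (4 / lam)) ≤ c.len n := by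
  set j := Nat.log 2 n
  have h2j : (2 : ℝ) ^ j ≤ n := by exact_mod_cast Nat.pow_log_le_self 2 hn
  have hα : 0 ≤ logb 2 (4 / lam) :=
    logb_nonneg one_lt_two (by rw [le_div_iff₀ hlam0]; linarith)
  have hpow : (n : ℝ) ^ (-logb 2 (4 / lam)) ≤ (lam / 4) ^ j :=
    calc (n : ℝ) ^ (-logb 2 (4 / lam)) ≤ ((2 : ℝ) ^ j) ^ (-logb 2 (4 / lam)) :=
          rpow_le_rpow_of_nonpos (by positivity) h2j (neg_nonpos.2 hα)
      _ = ((2 : ℝ) ^ (-logb 2 (4 / lam))) ^ j := by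
          rw [← rpow_natCast_mul zero_le_two, ← rpow_mul_natCast zero_le_two, mul_comm]
      _ = (lam / 4) ^ j := by
          rw [rpow_neg zero_le_two, rpow_logb two_pos (by norm_num) (by positivity), inv_div]
  calc lam ^ 2 / 8 * (n : ℝ) ^ (-logb 2 (4 / lam)) ≤ lam ^ 2 / 8 * (lam / 4) ^ j := by gcongr
    _ = lam / 2 * (lam / 4) ^ (j + 1) := by ring
    _ ≤ c.len n := hlac.le_len_of_lt_two_pow hlam0 hlam1 (Nat.lt_pow_succ_log_self one_lt_two n)

end Lacunary

section LogRatio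

variable {u : ℕ → ℝ} {α : ℝ}

theorem eventually_log_div_log_le_of_le_rpow
    (hu : ∀ᶠ n : ℕ in atTop, 0 < u n ∧ u n ≤ (n : ℝ) ^ (-α)) :
    ∀ᶠ n : ℕ in atTop, log (u n) / log n ≤ -α := by
  filter_upwards [hu, eventually_gt_atTop 1] with n ⟨hpos, hle⟩ hn
  rw [div_le_iff₀ (log_pos (by exact_mod_cast hn))]
  calc log (u n) ≤ log ((n : ℝ) ^ (-α)) := log_le_log hpos hle
    _ = -α * log n := log_rpow (by positivity) _

theorem isBoundedUnder_ge_log_div_log_of_rpow_le {C : ℝ} (hC : 0 < C)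
    (hu : ∀ᶠ n : ℕ in atTop, C * (n : ℝ) ^ (-α) ≤ u n) :
    IsBoundedUnder (· ≥ ·) atTop fun n : ℕ => log (u n) / log n := by
  have hlog : Tendsto (fun n : ℕ => log n) atTop atTop :=
    tendsto_log_atTop.comp tendsto_natCast_atTop_atTop
  refine isBoundedUnder_of_eventually_ge (a := -1 - α) ?_
  filter_upwards [hu, hlog.eventually_gt_atTop |log C|, eventually_gt_atTop 0]
    with n hle hlogn hn
  have hlogn0 : 0 < log n := (abs_nonneg _).trans_lt hlogn
  have : log C + -α * log n ≤ log (u n) :=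
    calc log C + -α * log n = log (C * (n : ℝ) ^ (-α)) := by
          rw [log_mul hC.ne' (by positivity), log_rpow (by positivity)]
      _ ≤ log (u n) := log_le_log (by positivity) hle
  rw [le_div_iff₀ hlogn0]
  linarith [neg_abs_le (log C)]

end LogRatio

theorem stmt_8_general (F : Set ℝ) (c : FractalComplement F)
    (lam : ℝ) (hlam0 : 0 < lam) (hlam1 : lam ≤ 1) (hlac : Lacunary c lam) :
    Filter.IsBoundedUnder (· ≥ ·) Filter.atTop
        (fun n : ℕ => Real.log (c.len n) / Real.log n) ∧
    Filter.liminf (fun n : ℕ => Real.log (c.len n) / Real.log n) Filter.atTop ≤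
      Filter.limsup (fun n : ℕ => Real.log (c.len n) / Real.log n) Filter.atTop ∧
    Filter.limsup (fun n : ℕ => Real.log (c.len n) / Real.log n) Filter.atTop ≤ -1 := by
  have hupper : ∀ᶠ n : ℕ in atTop, log (c.len n) / log n ≤ -1 :=
    eventually_log_div_log_le_of_le_rpow <|
      (eventually_ne_atTop 0).mono fun n hn => ⟨c.len_pos n, c.len_le_rpow_neg_one hn⟩
  have hlower := isBoundedUnder_ge_log_div_log_of_rpow_le (by positivity) <|
    (eventually_ne_atTop 0).mono fun n hn => hlac.rpow_le_len hlam0 hlam1 hn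
  exact ⟨hlower, liminf_le_limsup (isBoundedUnder_of_eventually_le hupper) hlower,
    limsup_le_of_le hlower.isCoboundedUnder_le hupper⟩

/-- under the lacunarity condition,
`-∞ < liminf log|I_n|/log n ≤ limsup log|I_n|/log n ≤ -1`
(the first inequality being expressed as eventual boundedness below). -/
theorem stmt_8 (F : Set ℝ) (hF : IsFractalSubset F) (c : FractalComplement F)
    (lam : ℝ) (hlam0 : 0 < lam) (hlam1 : lam ≤ 1) (hlac : Lacunary c lam) :
    Filter.IsBoundedUnder (· ≥ ·) Filter.atTop
        (fun n : ℕ => Real.log (c.len n) / Real.log n) ∧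
    Filter.liminf (fun n : ℕ => Real.log (c.len n) / Real.log n) Filter.atTop ≤
      Filter.limsup (fun n : ℕ => Real.log (c.len n) / Real.log n) Filter.atTop ∧
    Filter.limsup (fun n : ℕ => Real.log (c.len n) / Real.log n) Filter.atTop ≤ -1 :=
  stmt_8_general F c lam hlam0 hlam1 hlac
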